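/- arXiv:2411.12694 — 9 statements merged into one kernel-verified Lean document; each statement's English description precedes it below -/
import Mathlib

section
/- For any two locally fair fractional orientations of a weighted undirected graph G, every vertex has the same out-degree in both orientations. That is, if g and g' are the out-degree functions of two locally fair fractional orientations of G, then g(u) = g'(u) for all vertices u. -/
open Finset Real

noncomputable section

variable {V : Type*}

/-- The out-degree of `u` in a fractional orientation `o`. -/
def outdeg [Fintype V] (o : V → V → ℝ) (u : V) : ℝ := ∑ x : V, o u x

/-- `o` is a fractional orientation of the weighted graph `(G, w)`:
nonnegative values on directed edge-halves, supported on edges, summing to the edge weight. -/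
def IsOrientation [Fintype V] (G : SimpleGraph V) (w : V → V → ℝ) (o : V → V → ℝ) : Prop :=
  (∀ u v, 0 ≤ o u v) ∧ (∀ u v, ¬ G.Adj u v → o u v = 0) ∧
    (∀ u v, G.Adj u v → o u v + o v u = w u v)

/-- A fractional orientation is locally fair if positive weight on `u → v`
implies `g(u) ≤ g(v)`. -/
def LocallyFair [Fintype V] (o : V → V → ℝ) : Prop :=
  ∀ u v, 0 < o u v → outdeg o u ≤ outdeg o v

/-- A fractional orientation is `η`-fair if positive weight on `u → v`
implies `g(u) ≤ (1+η)·g(v)`. -/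
def EtaFair [Fintype V] (η : ℝ) (o : V → V → ℝ) : Prop :=
  ∀ u v, 0 < o u v → outdeg o u ≤ (1 + η) * outdeg o v

/-- Total weight of edges of `G` inside the vertex set `S`. -/
def edgeWeight [Fintype V] (G : SimpleGraph V) [DecidableRel G.Adj] (w : V → V → ℝ)
    (S : Finset V) : ℝ :=
  (∑ u ∈ S, ∑ v ∈ S, if G.Adj u v then w u v else 0) / 2

/-- Density of the subgraph induced on `S`. -/
def densityOn [Fintype V] (G : SimpleGraph V) [DecidableRel G.Adj] (w : V → V → ℝ)
    (S : Finset V) : ℝ :=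
  edgeWeight G w S / S.card

/-!
Let `g`, `g'` be the out-degrees of two locally fair orientations and suppose they differ
somewhere. Among the vertices where they differ pick `u` with `max (g u) (g' u)` largest, say
`g' u < g u`. By local fairness the superlevel set `S = {v | g u ≤ g v}` receives everything
its vertices send out under `g`, so `∑_S g` is the weight of the edges inside `S`, while
`∑_S g'` is at least that weight. But `g' ≤ g` on `S` by the choice of `u`, strictly at `u`.
-/

namespace IsOrientation

variable [Fintype V] {G : SimpleGraph V} {w o : V → V → ℝ}

lemma add_swap_eq_ite [DecidableRel G.Adj] (ho : IsOrientation G w o) (u v : V) :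
    o u v + o v u = if G.Adj u v then w u v else 0 := by
  by_cases h : G.Adj u v
  · simp [h, ho.2.2 u v h]
  · simp [h, ho.2.1 u v h, ho.2.1 v u (mt G.adj_symm h)]

lemma sum_sum_eq_edgeWeight [DecidableRel G.Adj] (ho : IsOrientation G w o) (S : Finset V) :
    ∑ u ∈ S, ∑ v ∈ S, o u v = edgeWeight G w S := by
  have hswap : ∑ u ∈ S, ∑ v ∈ S, o v u = ∑ u ∈ S, ∑ v ∈ S, o u v := Finset.sum_comm
  have hdouble : ∑ u ∈ S, ∑ v ∈ S, (o u v + o v u) = 2 * ∑ u ∈ S, ∑ v ∈ S, o u v := by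
    simp only [Finset.sum_add_distrib, hswap]
    ring
  simp only [edgeWeight, ← ho.add_swap_eq_ite, hdouble]
  ring

lemma sum_le_outdeg (ho : IsOrientation G w o) (u : V) (S : Finset V) :
    ∑ x ∈ S, o u x ≤ outdeg o u :=
  Finset.sum_le_sum_of_subset_of_nonneg (Finset.subset_univ S) fun x _ _ => ho.1 u x

lemma outdeg_eq_sum_of_closed (ho : IsOrientation G w o) {u : V} {S : Finset V}
    (hS : ∀ x, 0 < o u x → x ∈ S) : outdeg o u = ∑ x ∈ S, o u x := by
  refine (Finset.sum_subset (Finset.subset_univ S) fun x _ hx => ?_).symm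
  exact (ho.1 u x).eq_or_lt.elim Eq.symm fun hpos => absurd (hS x hpos) hx

end IsOrientation

namespace LocallyFair

variable [Fintype V] {G : SimpleGraph V} {w o o' : V → V → ℝ}

lemma sum_outdeg_superlevel_le (hf : LocallyFair o) (ho : IsOrientation G w o)
    (ho' : IsOrientation G w o') (M : ℝ) :
    ∑ v ∈ univ.filter (M ≤ outdeg o ·), outdeg o v
      ≤ ∑ v ∈ univ.filter (M ≤ outdeg o ·), outdeg o' v := by
  classical
  set S := univ.filter (M ≤ outdeg o ·)
  have hclosed : ∀ v ∈ S, ∀ x, 0 < o v x → x ∈ S := by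
    intro v hv x hpos
    simp only [S, Finset.mem_filter, Finset.mem_univ, true_and] at hv ⊢
    exact hv.trans (hf v x hpos)
  calc ∑ v ∈ S, outdeg o v
      = ∑ v ∈ S, ∑ x ∈ S, o v x :=
        Finset.sum_congr rfl fun v hv => ho.outdeg_eq_sum_of_closed (hclosed v hv)
    _ = ∑ v ∈ S, ∑ x ∈ S, o' v x := by
        rw [ho.sum_sum_eq_edgeWeight, ho'.sum_sum_eq_edgeWeight]
    _ ≤ ∑ v ∈ S, outdeg o' v := Finset.sum_le_sum fun v _ => ho'.sum_le_outdeg v S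

lemma exists_outdeg_lt (hf : LocallyFair o) (ho : IsOrientation G w o)
    (ho' : IsOrientation G w o') {u : V} (hu : outdeg o' u < outdeg o u) :
    ∃ v, outdeg o u ≤ outdeg o v ∧ outdeg o v < outdeg o' v := by
  by_contra! h
  have hlt : ∑ v ∈ univ.filter (outdeg o u ≤ outdeg o ·), outdeg o' v
      < ∑ v ∈ univ.filter (outdeg o u ≤ outdeg o ·), outdeg o v :=
    Finset.sum_lt_sum (fun v hv => h v (Finset.mem_filter.1 hv).2)
      ⟨u, by simp, hu⟩
  exact hlt.not_ge (hf.sum_outdeg_superlevel_le ho ho' _)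

end LocallyFair

theorem locally_fair_outdeg_unique_general [Fintype V] (G : SimpleGraph V) (w : V → V → ℝ)
    (o o' : V → V → ℝ)
    (ho : IsOrientation G w o) (ho' : IsOrientation G w o')
    (hf : LocallyFair o) (hf' : LocallyFair o') :
    ∀ u : V, outdeg o u = outdeg o' u := by
  classical
  by_contra! hdiff
  set D := univ.filter fun v => outdeg o v ≠ outdeg o' v
  obtain ⟨u, huD, hmax⟩ := D.exists_max_image (fun v => max (outdeg o v) (outdeg o' v))
    (hdiff.imp fun v hv => by simpa [D] using hv)
  have hmax' : ∀ v, outdeg o v ≠ outdeg o' v →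
      max (outdeg o v) (outdeg o' v) ≤ max (outdeg o u) (outdeg o' u) :=
    fun v hv => hmax v (by simpa [D] using hv)
  rcases (Finset.mem_filter.1 huD).2.lt_or_gt with hlt | hgt
  · obtain ⟨v, huv, hv⟩ := hf'.exists_outdeg_lt ho' ho hlt
    have := hmax' v hv.ne'
    rw [max_eq_right hlt.le] at this
    linarith [le_max_left (outdeg o v) (outdeg o' v)]
  · obtain ⟨v, huv, hv⟩ := hf.exists_outdeg_lt ho ho' hgt
    have := hmax' v hv.ne
    rw [max_eq_left hgt.le] at this
    linarith [le_max_right (outdeg o v) (outdeg o' v)]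

/-- any two locally fair fractional orientations of a weighted graph
give every vertex the same out-degree. -/
theorem locally_fair_outdeg_unique [Fintype V] (G : SimpleGraph V) (w : V → V → ℝ)
    (hwpos : ∀ u v, G.Adj u v → 0 < w u v) (hwsymm : ∀ u v, w u v = w v u)
    (o o' : V → V → ℝ)
    (ho : IsOrientation G w o) (ho' : IsOrientation G w o')
    (hf : LocallyFair o) (hf' : LocallyFair o') :
    ∀ u : V, outdeg o u = outdeg o' u :=
  locally_fair_outdeg_unique_general G w o o' ho ho' hf hf'
end
end

section
/- Every finite weighted undirected graph admits a locally fair fractional orientation. -/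
open Finset Real

noncomputable section

variable {V : Type*}

section Aux

variable {α : Type*} [DecidableEq α]

private lemma delta_cancel (u v : α) (hne : u ≠ v) (ε : ℝ) (a b : α) :
    ((if a = u ∧ b = v then -ε else if a = v ∧ b = u then ε else 0) : ℝ) +
      (if b = u ∧ a = v then -ε else if b = v ∧ a = u then ε else 0) = 0 := by
  split_ifs <;> simp_all

private lemma delta_row (u v : α) (hne : u ≠ v) (ε : ℝ) (x b : α) :
    ((if x = u ∧ b = v then -ε else if x = v ∧ b = u then ε else 0) : ℝ)
      = (if x = u then (if b = v then -ε else 0)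
          else if x = v then (if b = u then ε else 0) else 0) := by
  split_ifs <;> simp_all

end Aux

/-- every finite weighted graph admits a locally fair fractional orientation. -/
theorem exists_locally_fair_orientation [Fintype V] (G : SimpleGraph V) (w : V → V → ℝ)
    (hwpos : ∀ u v, G.Adj u v → 0 < w u v) (hwsymm : ∀ u v, w u v = w v u) :
    ∃ o : V → V → ℝ, IsOrientation G w o ∧ LocallyFair o := by
  classical
  set S : Set (V → V → ℝ) := {o | IsOrientation G w o} with hSdef
  -- continuity of evaluation
  have hc1 : ∀ u v : V, Continuous (fun o : V → V → ℝ => o u v) :=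
    fun u v => (continuous_apply v).comp (continuous_apply u)
  -- S is closed
  have hSclosed : IsClosed S := by
    have hrw : S = ⋂ u, ⋂ v, ({o : V → V → ℝ | 0 ≤ o u v} ∩
        {o : V → V → ℝ | ¬ G.Adj u v → o u v = 0} ∩
        {o : V → V → ℝ | G.Adj u v → o u v + o v u = w u v}) := by
      ext o
      simp only [hSdef, Set.mem_setOf_eq, Set.mem_iInter, Set.mem_inter_iff, IsOrientation]
      constructor
      · rintro ⟨A, B, C⟩ a b; exact ⟨⟨A a b, B a b⟩, C a b⟩
      · intro h
        exact ⟨fun a b => (h a b).1.1, fun a b => (h a b).1.2, fun a b => (h a b).2⟩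
    rw [hrw]
    refine isClosed_iInter fun u => isClosed_iInter fun v => (IsClosed.inter ?_ ?_).inter ?_
    · exact isClosed_le continuous_const (hc1 u v)
    · by_cases h : G.Adj u v
      · have : {o : V → V → ℝ | ¬ G.Adj u v → o u v = 0} = Set.univ := by
          ext o; simp [h]
        rw [this]; exact isClosed_univ
      · have : {o : V → V → ℝ | ¬ G.Adj u v → o u v = 0} = {o : V → V → ℝ | o u v = 0} := by
          ext o; simp [h]
        rw [this]; exact isClosed_eq (hc1 u v) continuous_const
    · by_cases h : G.Adj u v
      · have : {o : V → V → ℝ | G.Adj u v → o u v + o v u = w u v}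
            = {o : V → V → ℝ | o u v + o v u = w u v} := by
          ext o; simp [h]
        rw [this]; exact isClosed_eq ((hc1 u v).add (hc1 v u)) continuous_const
      · have : {o : V → V → ℝ | G.Adj u v → o u v + o v u = w u v} = Set.univ := by
          ext o; simp [h]
        rw [this]; exact isClosed_univ
  -- S is contained in a compact box
  have hSsub : S ⊆ Set.Icc (0 : V → V → ℝ) (fun u v => if G.Adj u v then w u v else 0) := by
    intro o ho
    obtain ⟨h1, h2, h3⟩ := ho
    constructor
    · intro u; intro v; exact h1 u v
    · intro u; intro v
      by_cases h : G.Adj u v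
      · simp only [if_pos h]
        have := h3 u v h
        nlinarith [h1 v u]
      · simp only [if_neg h]
        exact le_of_eq (h2 u v h)
  have hScompact : IsCompact S :=
    IsCompact.of_isClosed_subset isCompact_Icc hSclosed hSsub
  -- S is nonempty
  have hSne : S.Nonempty := by
    refine ⟨fun a b => if G.Adj a b then w a b / 2 else 0, ?_, ?_, ?_⟩
    · intro u v
      by_cases h : G.Adj u v
      · simp only [if_pos h]; linarith [hwpos u v h]
      · simp [h]
    · intro u v h; simp [h]
    · intro u v h
      simp only [if_pos h, if_pos h.symm]
      rw [hwsymm v u]; ring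
  -- minimize sum of squared outdegrees
  set F : (V → V → ℝ) → ℝ := fun o => ∑ x : V, (outdeg o x) ^ 2 with hFdef
  have hFcont : Continuous F := by
    apply continuous_finset_sum
    intro x _
    exact (continuous_finset_sum _ fun b _ => hc1 x b).pow 2
  obtain ⟨o, hoS, hmin⟩ := hScompact.exists_isMinOn hSne hFcont.continuousOn
  refine ⟨o, hoS, ?_⟩
  obtain ⟨h1, h2, h3⟩ := hoS
  intro u v hpos
  by_contra hgt
  push_neg at hgt
  have huv : G.Adj u v := by
    by_contra h
    exact absurd (h2 u v h) (ne_of_gt hpos)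
  have hne : u ≠ v := huv.ne
  set ε : ℝ := min (o u v) ((outdeg o u - outdeg o v) / 2) with hεdef
  have hεpos : 0 < ε := lt_min hpos (by linarith)
  have hε1 : ε ≤ o u v := min_le_left _ _
  have hε2 : ε ≤ (outdeg o u - outdeg o v) / 2 := min_le_right _ _
  -- the perturbation
  set δ : V → V → ℝ := fun a b =>
    if a = u ∧ b = v then -ε else if a = v ∧ b = u then ε else 0 with hδdef
  set o' : V → V → ℝ := fun a b => o a b + δ a b with ho'def
  have hcanc : ∀ a b, δ a b + δ b a = 0 := by
    intro a b
    simp only [hδdef]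
    exact delta_cancel u v hne ε a b
  -- o' is an orientation
  have ho'S : o' ∈ S := by
    refine ⟨?_, ?_, ?_⟩
    · intro a b
      simp only [ho'def, hδdef]
      split_ifs with hA hB
      · obtain ⟨rfl, rfl⟩ := hA; linarith
      · obtain ⟨rfl, rfl⟩ := hB; linarith [h1 a b]
      · simpa using h1 a b
    · intro a b hab
      simp only [ho'def, hδdef]
      split_ifs with hA hB
      · obtain ⟨rfl, rfl⟩ := hA; exact absurd huv hab
      · obtain ⟨rfl, rfl⟩ := hB; exact absurd huv.symm hab
      · simpa using h2 a b hab
    · intro a b hab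
      have := hcanc a b
      have := h3 a b hab
      simp only [ho'def]
      linarith
  -- outdegrees of o'
  have hdeg : ∀ x, outdeg o' x = outdeg o x +
      (if x = u then -ε else if x = v then ε else 0) := by
    intro x
    simp only [outdeg, ho'def, Finset.sum_add_distrib]
    congr 1
    have hrow : ∀ b, δ x b = (if x = u then (if b = v then -ε else 0)
        else if x = v then (if b = u then ε else 0) else 0) := by
      intro b
      simp only [hδdef]
      exact delta_row u v hne ε x b
    rw [Finset.sum_congr rfl fun b _ => hrow b]
    by_cases hx : x = u
    · simp [hx, Finset.sum_ite_eq']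
    · by_cases hx2 : x = v
      · simp [hx, hx2, Finset.sum_ite_eq']
      · simp [hx, hx2]
  -- compute F o'
  have hFeq : F o' = F o + ((outdeg o u - ε) ^ 2 - (outdeg o u) ^ 2)
      + ((outdeg o v + ε) ^ 2 - (outdeg o v) ^ 2) := by
    have hsplit : F o' = F o + ∑ x : V, ((outdeg o' x) ^ 2 - (outdeg o x) ^ 2) := by
      simp only [hFdef]
      rw [← Finset.sum_add_distrib]
      exact Finset.sum_congr rfl fun x _ => by ring
    have hvanish : ∑ x : V, ((outdeg o' x) ^ 2 - (outdeg o x) ^ 2)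
        = ((outdeg o u - ε) ^ 2 - (outdeg o u) ^ 2)
          + ((outdeg o v + ε) ^ 2 - (outdeg o v) ^ 2) := by
      calc ∑ x : V, ((outdeg o' x) ^ 2 - (outdeg o x) ^ 2)
          = ∑ x ∈ ({u, v} : Finset V), ((outdeg o' x) ^ 2 - (outdeg o x) ^ 2) := by
            refine (Finset.sum_subset (Finset.subset_univ _) ?_).symm
            intro x _ hx
            simp only [Finset.mem_insert, Finset.mem_singleton, not_or] at hx
            rw [hdeg x, if_neg hx.1, if_neg hx.2]
            ring
        _ = ((outdeg o' u) ^ 2 - (outdeg o u) ^ 2)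
              + ((outdeg o' v) ^ 2 - (outdeg o v) ^ 2) := Finset.sum_pair hne
        _ = ((outdeg o u - ε) ^ 2 - (outdeg o u) ^ 2)
              + ((outdeg o v + ε) ^ 2 - (outdeg o v) ^ 2) := by
            rw [hdeg u, hdeg v, if_pos rfl, if_neg hne.symm, if_pos rfl]
            ring
    rw [hsplit, hvanish]
    ring
  have hlt : F o' < F o := by
    rw [hFeq]
    nlinarith
  exact absurd (hmin ho'S) (not_le.mpr hlt)
end
end

section
/- Any fractional orientation minimizing the sum of squared out-degrees Σ_u g(u)² over all fractional orientations of a finite weighted graph G is locally fair. -/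
open Finset Real

noncomputable section

variable {V : Type*}

/-- any fractional orientation minimizing `Σ_u g(u)²` over all fractional
orientations is locally fair. -/
theorem min_sum_sq_locally_fair [Fintype V] (G : SimpleGraph V) (w : V → V → ℝ)
    (hwpos : ∀ u v, G.Adj u v → 0 < w u v) (hwsymm : ∀ u v, w u v = w v u)
    (o : V → V → ℝ) (ho : IsOrientation G w o)
    (hmin : ∀ o' : V → V → ℝ, IsOrientation G w o' →
      ∑ u : V, (outdeg o u) ^ 2 ≤ ∑ u : V, (outdeg o' u) ^ 2) :
    LocallyFair o := by
  classical
  intro u v huv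
  by_contra hlt
  push_neg at hlt
  obtain ⟨hnn, hsupp, hsum⟩ := ho
  have hadj : G.Adj u v := by
    by_contra h
    have := hsupp u v h
    linarith
  have hne : u ≠ v := hadj.ne
  set d := outdeg o u - outdeg o v with hd
  have hdpos : 0 < d := by simp only [hd]; linarith
  set ε := min (o u v) (d / 2) with hε
  have hεpos : 0 < ε := lt_min huv (by linarith)
  have hε1 : ε ≤ o u v := min_le_left _ _
  have hε2 : ε ≤ d / 2 := min_le_right _ _
  set o' : V → V → ℝ := fun x y =>
    o x y - (if x = u ∧ y = v then ε else 0) + (if x = v ∧ y = u then ε else 0) with ho'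
  have hval : ∀ x y, o' x y =
      o x y - (if x = u ∧ y = v then ε else 0) + (if x = v ∧ y = u then ε else 0) := by
    intro x y; rfl
  have hout : ∀ x, outdeg o' x =
      outdeg o x - (if x = u then ε else 0) + (if x = v then ε else 0) := by
    intro x
    simp only [outdeg, ho', Finset.sum_add_distrib, Finset.sum_sub_distrib]
    congr 1
    · congr 1
      by_cases hx : x = u
      · simp [hx]
      · simp [hx]
    · by_cases hx : x = v
      · simp [hx]
      · simp [hx]
  have horient : IsOrientation G w o' := by
    refine ⟨?_, ?_, ?_⟩
    · intro x y
      rw [hval]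
      by_cases h1 : x = u ∧ y = v
      · obtain ⟨rfl, rfl⟩ := h1
        have e1 : (if x = x ∧ y = y then ε else 0) = ε := if_pos ⟨rfl, rfl⟩
        have e2 : (if x = y ∧ y = x then ε else 0) = 0 :=
          if_neg (by rintro ⟨rfl, -⟩; exact hne rfl)
        rw [e1, e2]
        linarith
      · rw [if_neg h1]
        have := hnn x y
        by_cases h2 : x = v ∧ y = u
        · rw [if_pos h2]; linarith
        · rw [if_neg h2]; linarith
    · intro x y hxy
      rw [hval]
      have h1 : ¬ (x = u ∧ y = v) := fun h => hxy (by rw [h.1, h.2]; exact hadj)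
      have h2 : ¬ (x = v ∧ y = u) := fun h => hxy (by rw [h.1, h.2]; exact hadj.symm)
      rw [if_neg h1, if_neg h2, hsupp x y hxy]; ring
    · intro x y hxy
      rw [hval, hval]
      have hxyne : x ≠ y := hxy.ne
      have hw := hsum x y hxy
      by_cases h1 : x = u ∧ y = v
      · obtain ⟨rfl, rfl⟩ := h1
        have e1 : (if x = x ∧ y = y then ε else 0) = ε := if_pos ⟨rfl, rfl⟩
        have e2 : (if x = y ∧ y = x then ε else 0) = 0 :=
          if_neg (by rintro ⟨rfl, -⟩; exact hne rfl)
        have e3 : (if y = x ∧ x = y then ε else 0) = 0 :=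
          if_neg (by rintro ⟨rfl, -⟩; exact hne rfl)
        have e4 : (if y = y ∧ x = x then ε else 0) = ε := if_pos ⟨rfl, rfl⟩
        rw [e1, e2, e3, e4]
        linarith
      · by_cases h2 : x = v ∧ y = u
        · obtain ⟨rfl, rfl⟩ := h2
          have e1 : (if x = y ∧ y = x then ε else 0) = 0 :=
            if_neg (by rintro ⟨rfl, -⟩; exact hxyne rfl)
          have e2 : (if x = x ∧ y = y then ε else 0) = ε := if_pos ⟨rfl, rfl⟩
          have e3 : (if y = y ∧ x = x then ε else 0) = ε := if_pos ⟨rfl, rfl⟩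
          have e4 : (if y = x ∧ x = y then ε else 0) = 0 :=
            if_neg (by rintro ⟨rfl, -⟩; exact hxyne rfl)
          rw [e1, e2, e3, e4]
          linarith
        · have h3 : ¬ (y = u ∧ x = v) := fun h => h2 ⟨h.2, h.1⟩
          have h4 : ¬ (y = v ∧ x = u) := fun h => h1 ⟨h.2, h.1⟩
          rw [if_neg h1, if_neg h2, if_neg h3, if_neg h4]
          linarith
  have hsq : ∑ x : V, (outdeg o' x) ^ 2 < ∑ x : V, (outdeg o x) ^ 2 := by
    have key : ∑ x : V, ((outdeg o' x) ^ 2 - (outdeg o x) ^ 2)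
        = ∑ x ∈ ({u, v} : Finset V), ((outdeg o' x) ^ 2 - (outdeg o x) ^ 2) := by
      refine (Finset.sum_subset (Finset.subset_univ _) ?_).symm
      intro x _ hx
      simp only [Finset.mem_insert, Finset.mem_singleton, not_or] at hx
      rw [hout x, if_neg hx.1, if_neg hx.2]
      ring
    have hpair : ∑ x ∈ ({u, v} : Finset V), ((outdeg o' x) ^ 2 - (outdeg o x) ^ 2)
        = ((outdeg o' u) ^ 2 - (outdeg o u) ^ 2) + ((outdeg o' v) ^ 2 - (outdeg o v) ^ 2) :=
      Finset.sum_pair hne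
    have hu' : outdeg o' u = outdeg o u - ε := by
      rw [hout u, if_pos rfl, if_neg hne]; ring
    have hv' : outdeg o' v = outdeg o v + ε := by
      rw [hout v, if_neg (Ne.symm hne), if_pos rfl]; ring
    have hneg : ∑ x : V, ((outdeg o' x) ^ 2 - (outdeg o x) ^ 2) < 0 := by
      rw [key, hpair, hu', hv']
      have : (outdeg o u - ε) ^ 2 - (outdeg o u) ^ 2 + ((outdeg o v + ε) ^ 2 - (outdeg o v) ^ 2)
          = 2 * ε * (ε - d) := by
        simp only [hd]; ring
      rw [this]
      have : ε - d < 0 := by linarith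
      nlinarith
    have := Finset.sum_sub_distrib (s := (Finset.univ : Finset V))
      (f := fun x => (outdeg o' x) ^ 2) (g := fun x => (outdeg o x) ^ 2)
    linarith [hneg, this ▸ hneg]
  exact absurd (hmin o' horient) (not_le.mpr hsq)
end
end

section
/- For a finite weighted graph G, the maximum subgraph density ρ^max(G) equals the minimum over all fractional orientations of the maximum out-degree, i.e., ρ^max(G) = Δ^min(G). -/
open Finset Real

noncomputable section

variable {V : Type*}

-- edgeWeight identity
lemma edgeWeight_eq [Fintype V] (G : SimpleGraph V) [DecidableRel G.Adj] (w : V → V → ℝ)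
    (o : V → V → ℝ) (ho : IsOrientation G w o) (S : Finset V) :
    edgeWeight G w S = ∑ u ∈ S, ∑ v ∈ S, o u v := by
  obtain ⟨h0, hz, hs⟩ := ho
  have key : ∀ u v : V, (if G.Adj u v then w u v else 0) = o u v + o v u := by
    intro u v
    by_cases h : G.Adj u v
    · simp [h, hs u v h]
    · simp [h, hz u v h, hz v u (fun h' => h h'.symm)]
  unfold edgeWeight
  simp_rw [key]
  have : ∑ u ∈ S, ∑ v ∈ S, (o u v + o v u) = (∑ u ∈ S, ∑ v ∈ S, o u v) + ∑ u ∈ S, ∑ v ∈ S, o v u := by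
    simp [Finset.sum_add_distrib]
  rw [this, show (∑ u ∈ S, ∑ v ∈ S, o v u) = ∑ u ∈ S, ∑ v ∈ S, o u v from Finset.sum_comm]
  ring

lemma outdeg_nonneg [Fintype V] (G : SimpleGraph V) (w : V → V → ℝ)
    (o : V → V → ℝ) (ho : IsOrientation G w o) (u : V) : 0 ≤ outdeg o u :=
  Finset.sum_nonneg fun v _ => ho.1 u v

lemma density_le_iSup [Fintype V] (G : SimpleGraph V) [DecidableRel G.Adj] (w : V → V → ℝ)
    (o : V → V → ℝ) (ho : IsOrientation G w o) (S : Finset V) (hS : S.Nonempty) :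
    densityOn G w S ≤ ⨆ u : V, outdeg o u := by
  have hcard : (0:ℝ) < S.card := by exact_mod_cast Finset.card_pos.2 hS
  have hM : ∀ u, outdeg o u ≤ ⨆ u : V, outdeg o u := fun u =>
    le_ciSup (Set.finite_range _).bddAbove u
  unfold densityOn
  rw [edgeWeight_eq G w o ho S, div_le_iff₀ hcard]
  calc ∑ u ∈ S, ∑ v ∈ S, o u v ≤ ∑ u ∈ S, outdeg o u := by
        refine Finset.sum_le_sum fun u _ => ?_
        exact Finset.sum_le_sum_of_subset_of_nonneg S.subset_univ (fun v _ _ => ho.1 u v)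
    _ ≤ ∑ _u ∈ S, ⨆ u : V, outdeg o u := Finset.sum_le_sum fun u _ => hM u
    _ = (⨆ u : V, outdeg o u) * S.card := by
        rw [Finset.sum_const, nsmul_eq_mul, mul_comm]

section
variable [Fintype V] (G : SimpleGraph V) [DecidableRel G.Adj] (w : V → V → ℝ)

lemma exists_min_orientation (hwsymm : ∀ u v, w u v = w v u) (hwpos : ∀ u v, G.Adj u v → 0 < w u v) :
    ∃ o : V → V → ℝ, IsOrientation G w o ∧
      ∀ o' : V → V → ℝ, IsOrientation G w o' →
        ∑ u : V, (outdeg o u)^2 ≤ ∑ u : V, (outdeg o' u)^2 := by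
  classical
  set K : Set (V → V → ℝ) := {o | IsOrientation G w o} with hKdef
  have ev : ∀ u v : V, Continuous fun o : V → V → ℝ => o u v := fun u v =>
    (continuous_apply v).comp (continuous_apply u)
  -- K nonempty
  have hKne : K.Nonempty := by
    refine ⟨fun u v => if G.Adj u v then w u v / 2 else 0, ?_, ?_, ?_⟩
    · intro u v
      by_cases h : G.Adj u v
      · simp only [h, if_true]
        linarith [hwpos u v h]
      · simp [h]
    · intro u v h; simp [h]
    · intro u v h
      simp only [h, if_true, h.symm]
      rw [hwsymm v u]; ring
  -- K closed
  have hKcl : IsClosed K := by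
    have hrw : K = ⋂ (u : V), ⋂ (v : V), ({o : V → V → ℝ | 0 ≤ o u v} ∩
        {o : V → V → ℝ | if G.Adj u v then o u v + o v u = w u v else o u v = 0}) := by
      ext o
      simp only [Set.mem_iInter, Set.mem_inter_iff, Set.mem_setOf_eq, hKdef, IsOrientation]
      constructor
      · rintro ⟨h0, hz, hs⟩ u v
        refine ⟨h0 u v, ?_⟩
        split_ifs with h
        · exact hs u v h
        · exact hz u v h
      · intro h
        refine ⟨fun u v => (h u v).1, fun u v hv => ?_, fun u v hv => ?_⟩
        · have := (h u v).2; rwa [if_neg hv] at this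
        · have := (h u v).2; rwa [if_pos hv] at this
    rw [hrw]
    refine isClosed_iInter fun u => isClosed_iInter fun v =>
      (isClosed_le continuous_const (ev u v)).inter ?_
    split_ifs with h
    · exact isClosed_eq ((ev u v).add (ev v u)) continuous_const
    · exact isClosed_eq (ev u v) continuous_const
  -- K bounded
  set C : ℝ := ∑ a : V, ∑ b : V, |w a b| with hC
  have hwC : ∀ u v, |w u v| ≤ C := by
    intro u v
    calc |w u v| ≤ ∑ b : V, |w u b| :=
          Finset.single_le_sum (f := fun b => |w u b|) (fun b _ => abs_nonneg _) (Finset.mem_univ v)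
      _ ≤ C := Finset.single_le_sum (f := fun a => ∑ b : V, |w a b|)
          (fun a _ => Finset.sum_nonneg fun b _ => abs_nonneg _) (Finset.mem_univ u)
  have hC0 : 0 ≤ C := Finset.sum_nonneg fun a _ => Finset.sum_nonneg fun b _ => abs_nonneg _
  have hsub : K ⊆ Set.pi Set.univ (fun _ : V => Set.pi Set.univ (fun _ : V => Set.Icc (0:ℝ) C)) := by
    rintro o ⟨h0, hz, hs⟩ u _ v _
    refine ⟨h0 u v, ?_⟩
    by_cases h : G.Adj u v
    · have := hs u v h
      have := h0 v u
      have := hwC u v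
      have := le_abs_self (w u v)
      linarith
    · rw [hz u v h]; exact hC0
  have hKcomp : IsCompact K := IsCompact.of_isClosed_subset
    (isCompact_univ_pi fun _ => isCompact_univ_pi fun _ => isCompact_Icc) hKcl hsub
  have hΦ : Continuous fun o : V → V → ℝ => ∑ u : V, (outdeg o u)^2 := by
    refine continuous_finset_sum _ fun u _ => ?_
    exact (continuous_finset_sum _ fun v _ => ev u v).pow 2
  obtain ⟨o, hoK, hmin⟩ := hKcomp.exists_isMinOn hKne hΦ.continuousOn
  exact ⟨o, hoK, fun o' ho' => hmin ho'⟩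

end

section
variable [Fintype V] (G : SimpleGraph V) [DecidableRel G.Adj] (w : V → V → ℝ)

lemma min_is_fair (o : V → V → ℝ) (ho : IsOrientation G w o)
    (hmin : ∀ o' : V → V → ℝ, IsOrientation G w o' →
      ∑ u : V, (outdeg o u)^2 ≤ ∑ u : V, (outdeg o' u)^2) :
    LocallyFair o := by
  classical
  obtain ⟨h0, hz, hs⟩ := ho
  intro u v huv
  by_contra hlt
  push_neg at hlt
  have hadj : G.Adj u v := by
    by_contra h
    rw [hz u v h] at huv
    exact lt_irrefl 0 huv
  have hne : u ≠ v := G.ne_of_adj hadj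
  set a := outdeg o u with ha
  set b := outdeg o v with hb
  set δ : ℝ := min (o u v) ((a - b)/2) with hδ
  have hab : b < a := hlt
  have hδpos : 0 < δ := lt_min huv (by linarith)
  have hδ1 : δ ≤ o u v := min_le_left _ _
  have hδ2 : δ ≤ (a - b)/2 := min_le_right _ _
  set o' : V → V → ℝ := fun x y =>
    o x y + (if x = u ∧ y = v then -δ else 0) + (if x = v ∧ y = u then δ else 0) with ho'
  have ho'or : IsOrientation G w o' := by
    refine ⟨?_, ?_, ?_⟩
    · intro x y
      simp only [ho']
      by_cases h1 : x = u ∧ y = v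
      · obtain ⟨rfl, rfl⟩ := h1
        rw [if_pos ⟨rfl, rfl⟩, if_neg (fun h => hne h.1)]
        linarith
      · rw [if_neg h1]
        by_cases h2 : x = v ∧ y = u
        · rw [if_pos h2]
          have := h0 x y
          linarith
        · rw [if_neg h2]
          have := h0 x y
          linarith
    · intro x y hxy
      have h1 : ¬(x = u ∧ y = v) := by rintro ⟨rfl, rfl⟩; exact hxy hadj
      have h2 : ¬(x = v ∧ y = u) := by rintro ⟨rfl, rfl⟩; exact hxy hadj.symm
      simp only [ho', if_neg h1, if_neg h2, hz x y hxy]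
      ring
    · intro x y hxy
      have base := hs x y hxy
      simp only [ho']
      by_cases h1 : x = u ∧ y = v
      · obtain ⟨rfl, rfl⟩ := h1
        rw [if_pos ⟨rfl, rfl⟩, if_neg (fun h => hne h.1),
          if_neg (fun h => hne h.2), if_pos ⟨rfl, rfl⟩]
        linarith
      · by_cases h2 : x = v ∧ y = u
        · obtain ⟨rfl, rfl⟩ := h2
          rw [if_neg (fun h => hne h.2), if_pos ⟨rfl, rfl⟩,
            if_pos ⟨rfl, rfl⟩, if_neg (fun h => hne h.1)]
          linarith
        · have h1' : ¬(y = u ∧ x = v) := fun ⟨hy, hx⟩ => h2 ⟨hx, hy⟩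
          have h2' : ¬(y = v ∧ x = u) := fun ⟨hy, hx⟩ => h1 ⟨hx, hy⟩
          rw [if_neg h1, if_neg h2, if_neg h2', if_neg h1']
          linarith
  have houtdeg : ∀ x : V, outdeg o' x = outdeg o x +
      (if x = u then -δ else 0) + (if x = v then δ else 0) := by
    intro x
    simp only [outdeg, ho']
    rw [Finset.sum_add_distrib, Finset.sum_add_distrib]
    congr 1
    · congr 1
      by_cases hx : x = u
      · simp [hx]
      · simp [hx]
    · by_cases hx : x = v
      · simp [hx]
      · simp [hx]
  have hdu : outdeg o' u = a - δ := by
    rw [houtdeg u, if_pos rfl, if_neg hne]; ring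
  have hdv : outdeg o' v = b + δ := by
    rw [houtdeg v, if_neg (Ne.symm hne), if_pos rfl]; ring
  have hdother : ∀ x, x ≠ u → x ≠ v → outdeg o' x = outdeg o x := by
    intro x hxu hxv
    rw [houtdeg x, if_neg hxu, if_neg hxv]; ring
  -- compare Φ
  have hsplit : ∀ f : V → ℝ, ∑ x : V, f x = ∑ x ∈ ({u, v} : Finset V)ᶜ, f x + (f u + f v) := by
    intro f
    rw [← Finset.sum_compl_add_sum ({u, v} : Finset V) f, Finset.sum_pair hne]
  have hΦ' : ∑ x : V, (outdeg o' x)^2 < ∑ x : V, (outdeg o x)^2 := by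
    rw [hsplit (fun x => (outdeg o' x)^2), hsplit (fun x => (outdeg o x)^2)]
    have hcpl : ∑ x ∈ ({u, v} : Finset V)ᶜ, (outdeg o' x)^2
        = ∑ x ∈ ({u, v} : Finset V)ᶜ, (outdeg o x)^2 := by
      refine Finset.sum_congr rfl fun x hx => ?_
      simp only [Finset.mem_compl, Finset.mem_insert, Finset.mem_singleton, not_or] at hx
      rw [hdother x hx.1 hx.2]
    rw [hcpl, hdu, hdv]
    have : (a - δ)^2 + (b + δ)^2 < a^2 + b^2 := by nlinarith
    linarith
  exact absurd (hmin o' ho'or) (not_le.2 hΦ')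

end

section
variable [Fintype V] [Nonempty V] (G : SimpleGraph V) [DecidableRel G.Adj] (w : V → V → ℝ)

lemma fair_density (o : V → V → ℝ) (ho : IsOrientation G w o) (hfair : LocallyFair o) :
    ∃ S : Finset V, S.Nonempty ∧ densityOn G w S = ⨆ u : V, outdeg o u := by
  classical
  obtain ⟨u₀, hu₀⟩ := Finite.exists_max (outdeg o)
  set m := outdeg o u₀ with hm
  have hsup : (⨆ u : V, outdeg o u) = m := by
    rw [hm]
    exact le_antisymm (ciSup_le hu₀) (le_ciSup (Set.finite_range _).bddAbove u₀)
  set S : Finset V := Finset.univ.filter (fun x => outdeg o x = m) with hS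
  have hmem : ∀ x, x ∈ S ↔ outdeg o x = m := by
    intro x; simp [hS]
  have hSne : S.Nonempty := ⟨u₀, (hmem u₀).2 rfl⟩
  refine ⟨S, hSne, ?_⟩
  have hout : ∀ u ∈ S, ∀ v, v ∉ S → o u v = 0 := by
    intro u hu v hv
    by_contra hne0
    have hpos : 0 < o u v := lt_of_le_of_ne (ho.1 u v) (Ne.symm hne0)
    have h1 : outdeg o u ≤ outdeg o v := hfair u v hpos
    have h2 : outdeg o v = m := le_antisymm (hu₀ v) (((hmem u).1 hu) ▸ h1)
    exact hv ((hmem v).2 h2)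
  have hsum : ∑ u ∈ S, ∑ v ∈ S, o u v = ∑ u ∈ S, outdeg o u := by
    refine Finset.sum_congr rfl fun u hu => ?_
    exact Finset.sum_subset S.subset_univ (fun v _ hv => hout u hu v hv)
  have hcard : (0:ℝ) < S.card := by exact_mod_cast Finset.card_pos.2 hSne
  rw [hsup]
  unfold densityOn
  rw [edgeWeight_eq G w o ho S, hsum]
  rw [Finset.sum_congr rfl (fun u hu => (hmem u).1 hu), Finset.sum_const, nsmul_eq_mul]
  field_simp

end

/-- the maximum subgraph density equals the minimum over all fractional
orientations of the maximum out-degree. -/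
theorem max_density_eq_min_max_outdeg [Fintype V] [Nonempty V]
    (G : SimpleGraph V) [DecidableRel G.Adj] (w : V → V → ℝ)
    (hwpos : ∀ u v, G.Adj u v → 0 < w u v) (hwsymm : ∀ u v, w u v = w v u) :
    sSup {ρ : ℝ | ∃ S : Finset V, S.Nonempty ∧ ρ = densityOn G w S} =
      sInf {d : ℝ | ∃ o : V → V → ℝ, IsOrientation G w o ∧ d = ⨆ u : V, outdeg o u} := by
  classical
  obtain ⟨o, ho, hmin⟩ := exists_min_orientation G w hwsymm hwpos
  have hfair := min_is_fair G w o ho hmin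
  obtain ⟨S₀, hS₀ne, hS₀⟩ := fair_density G w o ho hfair
  set A := {ρ : ℝ | ∃ S : Finset V, S.Nonempty ∧ ρ = densityOn G w S} with hA
  set B := {d : ℝ | ∃ o : V → V → ℝ, IsOrientation G w o ∧ d = ⨆ u : V, outdeg o u} with hB
  have hAne : A.Nonempty := ⟨densityOn G w S₀, S₀, hS₀ne, rfl⟩
  have hBne : B.Nonempty := ⟨⨆ u : V, outdeg o u, o, ho, rfl⟩
  have hAub : ∀ ρ ∈ A, ∀ d ∈ B, ρ ≤ d := by
    rintro ρ ⟨S, hS, rfl⟩ d ⟨o', ho', rfl⟩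
    exact density_le_iSup G w o' ho' S hS
  have hBlb : BddBelow B := by
    refine ⟨0, fun d hd => ?_⟩
    obtain ⟨o', ho', rfl⟩ := hd
    exact le_trans (outdeg_nonneg G w o' ho' (Classical.arbitrary V))
      (le_ciSup (Set.finite_range _).bddAbove _)
  have hAbdd : BddAbove A := by
    refine ⟨⨆ u : V, outdeg o u, fun ρ hρ => ?_⟩
    obtain ⟨S, hS, rfl⟩ := hρ
    exact density_le_iSup G w o ho S hS
  apply le_antisymm
  · refine csSup_le hAne fun ρ hρ => le_csInf hBne fun d hd => hAub ρ hρ d hd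
  · calc sInf B ≤ ⨆ u : V, outdeg o u := csInf_le hBlb ⟨o, ho, rfl⟩
      _ = densityOn G w S₀ := hS₀.symm
      _ ≤ sSup A := le_csSup hAbdd ⟨S₀, hS₀ne, rfl⟩
end
end

section
/- Let G be a graph on n vertices, 0 < ε ≤ 1, and t = ⌈2 log n / ε⌉. Then for every vertex v there exists a subgraph H'_v contained in the t-hop neighbourhood of v such that ρ(H'_v) ≥ (1−ε)·ρ*(v), where ρ*(v) is the local density of v. -/
open Finset Real

noncomputable section

variable {V : Type*}

open scoped Classical

/-- Layers of the forward-reachability process from `v` along positively oriented edges. -/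
def Tset [Fintype V] (o : V → V → ℝ) (v : V) : ℕ → Finset V
  | 0 => {v}
  | i + 1 => Tset o v i ∪ Finset.univ.filter (fun w => ∃ u ∈ Tset o v i, 0 < o u w)

lemma mem_Tset_succ [Fintype V] (o : V → V → ℝ) (v : V) (i : ℕ) (w : V) :
    w ∈ Tset o v (i + 1) ↔ w ∈ Tset o v i ∨ ∃ u ∈ Tset o v i, 0 < o u w := by
  simp [Tset]

lemma Tset_subset_succ [Fintype V] (o : V → V → ℝ) (v : V) (i : ℕ) :
    Tset o v i ⊆ Tset o v (i + 1) := fun w hw => (mem_Tset_succ o v i w).2 (Or.inl hw)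

lemma v_mem_Tset [Fintype V] (o : V → V → ℝ) (v : V) (i : ℕ) : v ∈ Tset o v i := by
  induction i with
  | zero => simp [Tset]
  | succ i ih => exact Tset_subset_succ o v i ih

/-- for `t = ⌈2 log n / ε⌉`, every vertex `v` has a subgraph inside its
`t`-hop neighbourhood of density at least `(1-ε)·ρ*(v)`, where `ρ*(v)` is the
out-degree of `v` in a locally fair fractional orientation of the unit-weight graph. -/
theorem dense_subgraph_in_hop_neighbourhood [Fintype V]
    (G : SimpleGraph V) [DecidableRel G.Adj]
    (n : ℕ) (hn : Fintype.card V = n) (hn2 : 2 ≤ n)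
    (ε : ℝ) (hε : 0 < ε) (hε1 : ε ≤ 1)
    (o : V → V → ℝ) (ho : IsOrientation G (fun _ _ => 1) o) (hfair : LocallyFair o)
    (t : ℕ) (ht : t = ⌈2 * Real.log n / ε⌉₊) :
    ∀ v : V, ∃ S : Finset V, S.Nonempty ∧
      (∀ u ∈ S, G.Reachable v u ∧ G.dist v u ≤ t) ∧
      (1 - ε) * outdeg o v ≤ densityOn G (fun _ _ => 1) S := by
  intro v
  obtain ⟨hpos, hsupp, hsum⟩ := ho
  have hadj : ∀ u w : V, 0 < o u w → G.Adj u w := by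
    intro u w h
    by_contra hna
    rw [hsupp u w hna] at h; exact lt_irrefl _ h
  have hρ : 0 ≤ outdeg o v := Finset.sum_nonneg fun x _ => hpos v x
  -- outdeg lower bound on layers
  have hout : ∀ i, ∀ u ∈ Tset o v i, outdeg o v ≤ outdeg o u := by
    intro i
    induction i with
    | zero => intro u hu; simp [Tset] at hu; subst hu; exact le_rfl
    | succ i ih =>
      intro u hu
      rcases (mem_Tset_succ o v i u).1 hu with h | ⟨u', hu', hp⟩
      · exact ih u h
      · exact (ih u' hu').trans (hfair u' u hp)
  -- reachability and distance bounds on layers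
  have hdist : ∀ i, ∀ u ∈ Tset o v i, G.Reachable v u ∧ G.dist v u ≤ i := by
    intro i
    induction i with
    | zero =>
      intro u hu; simp [Tset] at hu; subst hu
      exact ⟨SimpleGraph.Reachable.refl _, by simp⟩
    | succ i ih =>
      intro u hu
      rcases (mem_Tset_succ o v i u).1 hu with h | ⟨u', hu', hp⟩
      · obtain ⟨hr, hd⟩ := ih u h; exact ⟨hr, hd.trans (Nat.le_succ i)⟩
      · obtain ⟨hr, hd⟩ := ih u' hu'
        have hadj' := hadj u' u hp
        obtain ⟨p, hpl⟩ := hr.exists_walk_length_eq_dist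
        refine ⟨hr.trans hadj'.reachable, ?_⟩
        have hle := SimpleGraph.dist_le (p.concat hadj')
        rw [SimpleGraph.Walk.length_concat, hpl] at hle
        omega
  -- edge-weight lower bound for consecutive layers
  have hEW : ∀ i, outdeg o v * ((Tset o v i).card : ℝ) ≤
      edgeWeight G (fun _ _ => 1) (Tset o v (i + 1)) := by
    intro i
    set A := Tset o v i with hA
    set B := Tset o v (i + 1) with hB
    have hAB : A ⊆ B := Tset_subset_succ o v i
    have key : edgeWeight G (fun _ _ => 1) B = ∑ u ∈ B, ∑ w ∈ B, o u w := by
      rw [edgeWeight]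
      have h1 : (∑ u ∈ B, ∑ w ∈ B, if G.Adj u w then (1 : ℝ) else 0)
          = ∑ u ∈ B, ∑ w ∈ B, (o u w + o w u) := by
        refine Finset.sum_congr rfl fun u _ => Finset.sum_congr rfl fun w _ => ?_
        by_cases h : G.Adj u w
        · simp only [if_pos h]; exact (hsum u w h).symm
        · simp only [if_neg h, hsupp u w h, hsupp w u (fun ha => h ha.symm), add_zero]
      rw [h1]
      have h2 : (∑ u ∈ B, ∑ w ∈ B, o w u) = ∑ u ∈ B, ∑ w ∈ B, o u w :=
        Finset.sum_comm
      simp_rw [Finset.sum_add_distrib]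
      rw [h2]; ring
    rw [key]
    have hstep1 : ∀ u ∈ A, (∑ w ∈ B, o u w) = outdeg o u := by
      intro u hu
      rw [outdeg, ← Finset.sum_subset (Finset.subset_univ B)]
      intro w _ hw
      by_contra hne
      have : 0 < o u w := lt_of_le_of_ne (hpos u w) (Ne.symm hne)
      exact hw ((mem_Tset_succ o v i w).2 (Or.inr ⟨u, hu, this⟩))
    calc outdeg o v * (A.card : ℝ) = A.card • outdeg o v := by
          rw [nsmul_eq_mul]; ring
      _ ≤ ∑ u ∈ A, outdeg o u := Finset.card_nsmul_le_sum A _ _ (fun u hu => hout i u hu)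
      _ = ∑ u ∈ A, ∑ w ∈ B, o u w := by
          exact (Finset.sum_congr rfl hstep1).symm
      _ ≤ ∑ u ∈ B, ∑ w ∈ B, o u w := by
          refine Finset.sum_le_sum_of_subset_of_nonneg hAB fun u _ _ => ?_
          exact Finset.sum_nonneg fun w _ => hpos u w
  -- basic numeric facts
  have hn1 : (1 : ℝ) ≤ (n : ℝ) := by exact_mod_cast (by omega : 1 ≤ n)
  have hn2' : (2 : ℝ) ≤ (n : ℝ) := by exact_mod_cast hn2
  have hlogn : 0 ≤ Real.log n := Real.log_nonneg hn1
  have htlb : 2 * Real.log n ≤ ε * t := by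
    have h2l : 2 * Real.log n / ε ≤ (t : ℝ) := by rw [ht]; exact Nat.le_ceil _
    calc 2 * Real.log n = (2 * Real.log n / ε) * ε := by field_simp
      _ ≤ (t : ℝ) * ε := mul_le_mul_of_nonneg_right h2l hε.le
      _ = ε * t := by ring
  have hpow : (1 - ε) ^ t ≤ 1 / (n : ℝ) ^ 2 := by
    have h1 : (1 - ε) ^ t ≤ Real.exp (-ε) ^ t :=
      pow_le_pow_left₀ (by linarith) (by linarith [Real.add_one_le_exp (-ε)]) t
    have h2 : Real.exp (-ε) ^ t = Real.exp (-(ε * t)) := by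
      rw [← Real.exp_nat_mul]; ring_nf
    have h3 : Real.exp (-(ε * t)) ≤ Real.exp (-(2 * Real.log n)) :=
      Real.exp_le_exp.2 (by linarith)
    have h4 : Real.exp (-(2 * Real.log n)) = 1 / (n : ℝ) ^ 2 := by
      rw [Real.exp_neg, show (2 : ℝ) * Real.log n = Real.log n + Real.log n by ring,
        Real.exp_add, Real.exp_log (by linarith)]
      field_simp
    rw [h2] at h1
    rw [← h4]; exact h1.trans h3
  have hcard : ∀ i, ((Tset o v i).card : ℝ) ≤ n := by
    intro i
    have h : (Tset o v i).card ≤ n := hn ▸ Finset.card_le_univ _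
    exact_mod_cast h
  -- pigeonhole: some layer grows by at most a 1/(1-ε) factor
  have hexists : ∃ i < t, (1 - ε) * ((Tset o v (i + 1)).card : ℝ) ≤
      ((Tset o v i).card : ℝ) := by
    by_contra hcon
    push_neg at hcon
    have hmono : ∀ i, i ≤ t → (1 : ℝ) ≤ (1 - ε) ^ i * ((Tset o v i).card : ℝ) := by
      intro i
      induction i with
      | zero => intro _; simp [Tset]
      | succ i ih =>
        intro hi
        have h := hcon i (by omega)
        calc (1 : ℝ) ≤ (1 - ε) ^ i * ((Tset o v i).card : ℝ) := ih (by omega)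
          _ ≤ (1 - ε) ^ i * ((1 - ε) * ((Tset o v (i + 1)).card : ℝ)) :=
              mul_le_mul_of_nonneg_left h.le (pow_nonneg (by linarith) i)
          _ = (1 - ε) ^ (i + 1) * ((Tset o v (i + 1)).card : ℝ) := by ring
    have h1 := hmono t le_rfl
    have h2 : (1 - ε) ^ t * ((Tset o v t).card : ℝ) ≤ (1 / (n : ℝ) ^ 2) * n := by
      have := mul_le_mul hpow (hcard t) (Nat.cast_nonneg _) (by positivity)
      linarith
    have h3 : (1 / (n : ℝ) ^ 2) * n = 1 / n := by field_simp
    rw [h3] at h2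
    have : (1 : ℝ) ≤ 1 / n := h1.trans h2
    rw [le_div_iff₀ (by linarith)] at this
    linarith
  obtain ⟨i, hit, hic⟩ := hexists
  refine ⟨Tset o v (i + 1), ⟨v, v_mem_Tset o v (i + 1)⟩, ?_, ?_⟩
  · intro u hu
    obtain ⟨hr, hd⟩ := hdist (i + 1) u hu
    exact ⟨hr, hd.trans (by omega)⟩
  · have hBpos : 0 < ((Tset o v (i + 1)).card : ℝ) := by
      exact_mod_cast Finset.card_pos.2 ⟨v, v_mem_Tset o v (i + 1)⟩
    rw [densityOn, le_div_iff₀ hBpos]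
    calc (1 - ε) * outdeg o v * ((Tset o v (i + 1)).card : ℝ)
        = outdeg o v * ((1 - ε) * ((Tset o v (i + 1)).card : ℝ)) := by ring
      _ ≤ outdeg o v * ((Tset o v i).card : ℝ) := mul_le_mul_of_nonneg_left hic hρ
      _ ≤ edgeWeight G (fun _ _ => 1) (Tset o v (i + 1)) := hEW i
end
end

section
/- For a finite weighted graph G, the optimal value of the linear program DS (maximize Σ_{uv∈E} g(uv)·y_{uv} subject to x_u ≥ y_{uv}, x_v ≥ y_{uv} for every edge uv, Σ_v x_v ≤ 1, and x, y ≥ 0) equals the maximum subgraph density ρ^max(G). -/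
open Finset Real

noncomputable section

variable {V : Type*}

/-- A feasible solution `(x, y)` of the LP DS. -/
def LPFeasible [Fintype V] (G : SimpleGraph V) (x : V → ℝ) (y : V → V → ℝ) : Prop :=
  (∀ v, 0 ≤ x v) ∧ (∀ u v, 0 ≤ y u v) ∧ (∀ u v, y u v = y v u) ∧
    (∀ u v, G.Adj u v → y u v ≤ x u ∧ y u v ≤ x v) ∧ (∑ v : V, x v ≤ 1)

open scoped Classical in
lemma sum_ind_one' [Fintype V] (S : Finset V) (g : V → ℝ) :
    (∑ i : V, if i ∈ S then g i else 0) = ∑ i ∈ S, g i :=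
  (Finset.sum_subset (Finset.subset_univ S) (fun i _ hi => if_neg hi)).symm.trans
    (Finset.sum_congr rfl (fun i hi => if_pos hi))

open scoped Classical in
lemma sum_ind_two' [Fintype V] (S : Finset V) (f : V → V → ℝ) :
    (∑ u : V, ∑ v : V, if u ∈ S ∧ v ∈ S then f u v else 0) = ∑ u ∈ S, ∑ v ∈ S, f u v := by
  classical
  have h1 : ∀ u, (∑ v : V, if u ∈ S ∧ v ∈ S then f u v else 0) =
      if u ∈ S then (∑ v : V, if v ∈ S then f u v else 0) else 0 := by
    intro u; by_cases hu : u ∈ S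
    · simp only [hu, true_and, if_true]
    · simp [hu]
  rw [Finset.sum_congr rfl fun u _ => h1 u, sum_ind_one']
  exact Finset.sum_congr rfl fun u _ => sum_ind_one' _ _

lemma key_ineq [Fintype V] (G : SimpleGraph V) [DecidableRel G.Adj] (w : V → V → ℝ)
    (ρ : ℝ)
    (hE : ∀ S : Finset V, S.Nonempty → edgeWeight G w S ≤ ρ * S.card) :
    ∀ (n : ℕ) (x : V → ℝ), (∀ v, 0 ≤ x v) →
      (Finset.univ.filter fun v => 0 < x v).card ≤ n →
      (∑ u : V, ∑ v : V, if G.Adj u v then w u v * min (x u) (x v) else 0) ≤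
        2 * ρ * ∑ v : V, x v := by
  classical
  intro n
  induction n with
  | zero =>
    intro x hx hcard
    have hzero : ∀ v, x v = 0 := by
      intro v
      by_contra h
      have hv : 0 < x v := lt_of_le_of_ne (hx v) (Ne.symm h)
      have : v ∈ Finset.univ.filter fun v => 0 < x v := by simp [hv]
      have := Finset.card_pos.mpr ⟨v, this⟩
      omega
    simp [hzero]
  | succ n ih =>
    intro x hx hcard
    set S : Finset V := Finset.univ.filter fun v => 0 < x v with hSdef
    by_cases hS : S.Nonempty
    · obtain ⟨v₀, hv₀S, hv₀⟩ := Finset.exists_mem_eq_inf' hS x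
      set m : ℝ := S.inf' hS x with hmdef
      have hm : 0 < m := by
        rw [hv₀]
        exact (Finset.mem_filter.mp hv₀S).2
      set x' : V → ℝ := fun v => x v - if v ∈ S then m else 0 with hx'def
      have hxeq : ∀ v, x v = x' v + (if v ∈ S then m else 0) := by
        intro v; simp [hx'def]
      have hx'nonneg : ∀ v, 0 ≤ x' v := by
        intro v
        by_cases hv : v ∈ S
        · simp only [hx'def, hv, if_pos, sub_nonneg]
          exact Finset.inf'_le x hv
        · simp [hx'def, hv, hx v]
      have hxnotS : ∀ v, v ∉ S → x v = 0 := by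
        intro v hv
        have : ¬ 0 < x v := by simpa [hSdef] using hv
        linarith [hx v]
      have hsub : (Finset.univ.filter fun v => 0 < x' v) ⊆ S.erase v₀ := by
        intro v hv
        have hv' : 0 < x' v := (Finset.mem_filter.mp hv).2
        have hvS : v ∈ S := by
          by_contra h
          have := hxnotS v h
          simp [hx'def, h, this] at hv'
        refine Finset.mem_erase.mpr ⟨?_, hvS⟩
        rintro rfl
        simp [hx'def, hvS, ← hv₀] at hv'
      have hcard' : (Finset.univ.filter fun v => 0 < x' v).card ≤ n := by
        have h1 := Finset.card_le_card hsub
        have h2 : (S.erase v₀).card = S.card - 1 := Finset.card_erase_of_mem hv₀S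
        have h3 : S.card ≤ n + 1 := hcard
        have h4 : 1 ≤ S.card := Finset.card_pos.mpr ⟨v₀, hv₀S⟩
        omega
      have IH := ih x' hx'nonneg hcard'
      -- pointwise identity for min
      have hmin : ∀ u v, G.Adj u v →
          w u v * min (x u) (x v) = w u v * min (x' u) (x' v) +
            m * ((if u ∈ S then (1:ℝ) else 0) * (if v ∈ S then (1:ℝ) else 0) *
              (if G.Adj u v then w u v else 0)) := by
        intro u v hadj
        by_cases hu : u ∈ S
        · by_cases hv : v ∈ S
          · have h1 : x u = x' u + m := by rw [hxeq u]; simp [hu]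
            have h2 : x v = x' v + m := by rw [hxeq v]; simp [hv]
            rw [h1, h2]
            simp [hu, hv, hadj, min_add_add_right]
            ring
          · have h1 : x v = 0 := hxnotS v hv
            have h2 : x' v = 0 := by simp [hx'def, hv, h1]
            have : min (x u) (x v) = 0 := by
              rw [h1]; exact min_eq_right (hx u)
            have h3 : min (x' u) (x' v) = 0 := by
              rw [h2]; exact min_eq_right (hx'nonneg u)
            simp [this, h3, hv]
        · have h1 : x u = 0 := hxnotS u hu
          have h2 : x' u = 0 := by simp [hx'def, hu, h1]
          have : min (x u) (x v) = 0 := by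
            rw [h1]; exact min_eq_left (hx v)
          have h3 : min (x' u) (x' v) = 0 := by
            rw [h2]; exact min_eq_left (hx'nonneg v)
          simp [this, h3, hu]
      -- sum decomposition
      have hFeq : (∑ u : V, ∑ v : V, if G.Adj u v then w u v * min (x u) (x v) else 0)
          = (∑ u : V, ∑ v : V, if G.Adj u v then w u v * min (x' u) (x' v) else 0)
            + m * (∑ u ∈ S, ∑ v ∈ S, if G.Adj u v then w u v else 0) := by
        have step : ∀ u v : V, (if G.Adj u v then w u v * min (x u) (x v) else 0)
            = (if G.Adj u v then w u v * min (x' u) (x' v) else 0)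
              + m * ((if u ∈ S then (1:ℝ) else 0) * (if v ∈ S then (1:ℝ) else 0) *
                (if G.Adj u v then w u v else 0)) := by
          intro u v
          by_cases hadj : G.Adj u v
          · simpa [hadj] using hmin u v hadj
          · simp [hadj]
        have outer : ∀ (f : V → ℝ), (∑ i : V, if i ∈ S then f i else 0) = ∑ i ∈ S, f i := by
          intro f
          exact (Finset.sum_subset (Finset.subset_univ S)
            (fun i _ hi => if_neg hi)).symm.trans
            (Finset.sum_congr rfl (fun i hi => if_pos hi))
        simp only [step, Finset.sum_add_distrib, ← Finset.mul_sum]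
        congr 1
        congr 1
        have h1 : ∀ i : V, (∑ j : V, ((if i ∈ S then (1:ℝ) else 0) * if j ∈ S then 1 else 0) *
            (if G.Adj i j then w i j else 0)) =
            if i ∈ S then (∑ j : V, if j ∈ S then (if G.Adj i j then w i j else 0) else 0)
            else 0 := by
          intro i
          by_cases hi : i ∈ S
          · simp only [hi, if_true, one_mul]
            apply Finset.sum_congr rfl; intro j _
            by_cases hj : j ∈ S <;> simp [hj]
          · simp [hi]
        rw [Finset.sum_congr rfl (fun i _ => h1 i), outer]
        exact Finset.sum_congr rfl (fun i _ => outer _)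
      have hsumeq : (∑ v : V, x v) = (∑ v : V, x' v) + m * S.card := by
        rw [Finset.sum_congr rfl (fun v _ => hxeq v), Finset.sum_add_distrib]
        congr 1
        have h5 : (∑ v : V, if v ∈ S then m else 0) = ∑ v ∈ S, m :=
          (Finset.sum_subset (Finset.subset_univ S)
            (fun i _ hi => if_neg hi)).symm.trans
            (Finset.sum_congr rfl (fun i hi => if_pos hi))
        rw [h5, Finset.sum_const, nsmul_eq_mul, mul_comm]
      have hEW : (∑ u ∈ S, ∑ v ∈ S, if G.Adj u v then w u v else 0) ≤ 2 * (ρ * S.card) := by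
        have := hE S hS
        rw [edgeWeight] at this
        linarith
      have hmE : m * (∑ u ∈ S, ∑ v ∈ S, if G.Adj u v then w u v else 0)
          ≤ m * (2 * (ρ * S.card)) := mul_le_mul_of_nonneg_left hEW hm.le
      rw [hFeq, hsumeq]
      nlinarith [IH]
    · have hzero : ∀ v, x v = 0 := by
        intro v
        by_contra h
        exact hS ⟨v, by simp [hSdef, lt_of_le_of_ne (hx v) (Ne.symm h)]⟩
      simp [hzero]


/-- the optimal value of the LP DS equals the maximum subgraph density. -/
theorem lp_ds_eq_max_density [Fintype V] [Nonempty V]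
    (G : SimpleGraph V) [DecidableRel G.Adj] (w : V → V → ℝ)
    (hwpos : ∀ u v, G.Adj u v → 0 < w u v) (hwsymm : ∀ u v, w u v = w v u) :
    sSup {r : ℝ | ∃ (x : V → ℝ) (y : V → V → ℝ), LPFeasible G x y ∧
        r = (∑ u : V, ∑ v : V, if G.Adj u v then w u v * y u v else 0) / 2} =
      sSup {ρ : ℝ | ∃ S : Finset V, S.Nonempty ∧ ρ = densityOn G w S} := by
  classical
  set D : Set ℝ := {ρ : ℝ | ∃ S : Finset V, S.Nonempty ∧ ρ = densityOn G w S} with hD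
  set L : Set ℝ := {r : ℝ | ∃ (x : V → ℝ) (y : V → V → ℝ), LPFeasible G x y ∧
      r = (∑ u : V, ∑ v : V, if G.Adj u v then w u v * y u v else 0) / 2} with hL
  have hDne : D.Nonempty :=
    ⟨densityOn G w {Classical.arbitrary V}, {Classical.arbitrary V},
      Finset.singleton_nonempty _, rfl⟩
  have hDfin : D.Finite := by
    have hsub : D ⊆ (fun S => densityOn G w S) '' Set.univ := by
      rintro ρ ⟨S, _, rfl⟩; exact ⟨S, trivial, rfl⟩
    exact (Set.finite_univ.image _).subset hsub
  have hρmem : sSup D ∈ D := hDne.csSup_mem hDfin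
  have hub : ∀ ρ ∈ D, ρ ≤ sSup D := fun ρ hρ => le_csSup hDfin.bddAbove hρ
  have hρ0 : (0:ℝ) ≤ sSup D := by
    refine le_trans (le_of_eq ?_) (hub (densityOn G w {Classical.arbitrary V})
      ⟨{Classical.arbitrary V}, Finset.singleton_nonempty _, rfl⟩)
    simp [densityOn, edgeWeight]
  have hE : ∀ S : Finset V, S.Nonempty → edgeWeight G w S ≤ sSup D * S.card := by
    intro S hS
    have h1 := hub (densityOn G w S) ⟨S, hS, rfl⟩
    have hc : (0:ℝ) < S.card := by
      exact_mod_cast Finset.card_pos.mpr hS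
    rw [densityOn, div_le_iff₀ hc] at h1
    exact h1
  have hLub : ∀ r ∈ L, r ≤ sSup D := by
    rintro r ⟨x, y, ⟨hx0, hy0, hysym, hyx, hsum⟩, rfl⟩
    have h1 : (∑ u : V, ∑ v : V, if G.Adj u v then w u v * y u v else 0) ≤
        ∑ u : V, ∑ v : V, if G.Adj u v then w u v * min (x u) (x v) else 0 := by
      apply Finset.sum_le_sum; intro u _
      apply Finset.sum_le_sum; intro v _
      by_cases hadj : G.Adj u v
      · simp only [hadj, if_true]
        exact mul_le_mul_of_nonneg_left
          (le_min (hyx u v hadj).1 (hyx u v hadj).2) (hwpos u v hadj).le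
      · simp [hadj]
    have h2 := key_ineq G w (sSup D) hE
      (Finset.univ.filter fun v => 0 < x v).card x hx0 le_rfl
    have h3 : 2 * sSup D * ∑ v : V, x v ≤ 2 * sSup D := by
      nlinarith
    linarith
  have hLne : L.Nonempty := by
    refine ⟨0, fun _ => 0, fun _ _ => 0, ⟨fun _ => le_rfl, fun _ _ => le_rfl,
      fun _ _ => rfl, fun u v _ => ⟨le_rfl, le_rfl⟩, by simp⟩, by simp⟩
  apply le_antisymm
  · exact csSup_le hLne hLub
  · apply le_csSup ⟨sSup D, fun r hr => hLub r hr⟩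
    obtain ⟨S₀, hS₀, hρeq⟩ := hρmem
    have hn : (0:ℝ) < S₀.card := by exact_mod_cast Finset.card_pos.mpr hS₀
    set c : ℝ := 1 / S₀.card with hc
    have hc0 : 0 ≤ c := by positivity
    refine ⟨fun v => if v ∈ S₀ then c else 0,
      fun u v => if u ∈ S₀ ∧ v ∈ S₀ then c else 0, ⟨?_, ?_, ?_, ?_, ?_⟩, ?_⟩
    · intro v; by_cases hv : v ∈ S₀ <;> simp [hv, hc0]
    · intro u v; by_cases h : u ∈ S₀ ∧ v ∈ S₀ <;> simp [h, hc0]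
    · intro u v
      by_cases hu : u ∈ S₀ <;> by_cases hv : v ∈ S₀ <;> simp [hu, hv]
    · intro u v _
      constructor
      · by_cases hu : u ∈ S₀ <;> by_cases hv : v ∈ S₀ <;> simp [hu, hv, hc0]
      · by_cases hu : u ∈ S₀ <;> by_cases hv : v ∈ S₀ <;> simp [hu, hv, hc0]
    · dsimp only
      rw [sum_ind_one', Finset.sum_const, nsmul_eq_mul, hc]
      rw [mul_one_div, div_self (ne_of_gt hn)]
    · dsimp only
      rw [hρeq, densityOn, edgeWeight]
      have hterm : ∀ u v : V, (if G.Adj u v then w u v *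
          (if u ∈ S₀ ∧ v ∈ S₀ then c else 0) else 0) =
          (if u ∈ S₀ ∧ v ∈ S₀ then (if G.Adj u v then w u v else 0) * c else 0) := by
        intro u v
        by_cases hadj : G.Adj u v <;> by_cases huv : u ∈ S₀ ∧ v ∈ S₀ <;>
          simp [hadj, huv]
      rw [Finset.sum_congr rfl fun u _ => Finset.sum_congr rfl fun v _ => hterm u v]
      rw [sum_ind_two']
      have h6 : (∑ u ∈ S₀, ∑ v ∈ S₀, (if G.Adj u v then w u v else 0) * c) =
          (∑ u ∈ S₀, ∑ v ∈ S₀, if G.Adj u v then w u v else 0) * c := by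
        rw [Finset.sum_mul]
        exact Finset.sum_congr rfl fun u _ => (Finset.sum_mul _ _ _).symm
      rw [h6, hc, mul_one_div]
      ring
end
end

section
/- Let (x,y) be a feasible solution of the LP DS with objective value R for a finite weighted graph G. Then there exists a threshold r > 0 such that the set V(r) = {u : x_u ≥ r} is nonempty and the total weight of edges with y-value at least r satisfies Σ_{uv : y_{uv} ≥ r} g(uv) ≥ R·|V(r)|. -/
open Finset Real

noncomputable section

variable {V : Type*}

/-! For `r > 0` let `V(r) = {u | r ≤ x u}` and let `E(r)` be the weight of the edges with
`r ≤ y_{uv}`. Integrating over the threshold `r ∈ (0, M]`, `M = max x`, gives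
`∫ |V(r)| = Σ x ≤ 1` and `∫ E(r) = R` (layer cake), so the gap `E(r) - R |V(r)|` has
nonnegative integral and is therefore nonnegative at some `r`; there `V(r)` contains a maximiser
of `x`. -/

open MeasureTheory Set

theorem exists_nonneg_of_setIntegral_nonneg {α : Type*} [MeasurableSpace α] {μ : Measure α}
    {s : Set α} {f : α → ℝ} (hμ : μ s ≠ 0) (hμ₁ : μ s ≠ ⊤) (hf : IntegrableOn f s μ)
    (h : 0 ≤ ∫ a in s, f a ∂μ) : ∃ a ∈ s, 0 ≤ f a := by
  obtain ⟨a, ha, hle⟩ := exists_setAverage_le hμ hμ₁ hf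
  refine ⟨a, ha, le_trans ?_ hle⟩
  rw [setAverage_eq]
  exact smul_nonneg (inv_nonneg.mpr measureReal_nonneg) h

theorem ite_le_eq_indicator (a c : ℝ) :
    (fun r : ℝ => if r ≤ a then c else 0) = (Iic a).indicator fun _ => c := by
  ext r; simp [indicator_apply]

theorem integrableOn_ite_le (a c : ℝ) {s : Set ℝ} (hs : volume s ≠ ⊤) :
    IntegrableOn (fun r => if r ≤ a then c else 0) s := by
  rw [ite_le_eq_indicator]
  exact (integrableOn_const hs).indicator measurableSet_Iic

theorem setIntegral_Ioc_ite_le (c : ℝ) {a M : ℝ} (ha : 0 ≤ a) (haM : a ≤ M) :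
    ∫ r in Ioc 0 M, (if r ≤ a then c else 0) = c * a := by
  rw [ite_le_eq_indicator, setIntegral_indicator measurableSet_Iic,
    Ioc_inter_Iic, min_eq_right haM, setIntegral_const, Real.volume_real_Ioc_of_le ha, sub_zero,
    smul_eq_mul, mul_comm]

section SuperlevelSets

variable {M : ℝ}

theorem integrableOn_card_superlevel [Fintype V] (x : V → ℝ) :
    IntegrableOn (fun r => ((univ.filter fun u => r ≤ x u).card : ℝ)) (Ioc 0 M) := by
  simp only [natCast_card_filter]
  exact integrable_finsetSum _ fun u _ => integrableOn_ite_le _ _ measure_Ioc_lt_top.ne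

theorem integral_card_superlevel [Fintype V] {x : V → ℝ} (hx : ∀ u, 0 ≤ x u) (hxM : ∀ u, x u ≤ M) :
    ∫ r in Ioc 0 M, ((univ.filter fun u => r ≤ x u).card : ℝ) = ∑ u, x u := by
  simp only [natCast_card_filter]
  rw [integral_finsetSum _ fun u _ => integrableOn_ite_le _ _ measure_Ioc_lt_top.ne]
  simp [setIntegral_Ioc_ite_le _ (hx _) (hxM _)]

variable (G : SimpleGraph V) [DecidableRel G.Adj] (w : V → V → ℝ)

theorem integrableOn_edge_superlevel (y : V → V → ℝ) (u v : V) :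
    IntegrableOn (fun r => if G.Adj u v then (if r ≤ y u v then w u v else 0) else 0)
      (Ioc 0 M) := by
  split_ifs
  · exact integrableOn_ite_le _ _ measure_Ioc_lt_top.ne
  · exact integrableOn_zero

variable [Fintype V]

theorem integrableOn_superlevel_edgeWeight (y : V → V → ℝ) :
    IntegrableOn (fun r => ∑ u, ∑ v, if G.Adj u v ∧ r ≤ y u v then w u v else 0) (Ioc 0 M) := by
  simp only [ite_and]
  exact integrable_finsetSum _ fun u _ => integrable_finsetSum _ fun v _ =>
    integrableOn_edge_superlevel G w y u v

theorem integral_superlevel_edgeWeight {y : V → V → ℝ} (hy : ∀ u v, 0 ≤ y u v)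
    (hyM : ∀ u v, G.Adj u v → y u v ≤ M) :
    ∫ r in Ioc 0 M, (∑ u, ∑ v, if G.Adj u v ∧ r ≤ y u v then w u v else 0) =
      ∑ u, ∑ v, if G.Adj u v then w u v * y u v else 0 := by
  have hterm := integrableOn_edge_superlevel (M := M) G w y
  simp only [ite_and]
  rw [integral_finsetSum _ fun u _ => integrable_finsetSum _ fun v _ => hterm u v]
  refine sum_congr rfl fun u _ => ?_
  rw [integral_finsetSum _ fun v _ => hterm u v]
  refine sum_congr rfl fun v _ => ?_
  split_ifs with huv
  · exact setIntegral_Ioc_ite_le _ (hy u v) (hyM u v huv)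
  · exact integral_zero _ _

theorem exists_adj_pos_of_sum_pos {y : V → V → ℝ} (hy : ∀ u v, 0 ≤ y u v)
    (h : 0 < ∑ u, ∑ v, if G.Adj u v then w u v * y u v else 0) :
    ∃ u v, G.Adj u v ∧ 0 < y u v := by
  by_contra! hne
  refine h.ne' (sum_eq_zero fun u _ => sum_eq_zero fun v _ => ?_)
  split_ifs with huv
  · simp [le_antisymm (hne u v huv) (hy u v)]
  · rfl

end SuperlevelSets

theorem lp_threshold_exists_general [Fintype V]
    (G : SimpleGraph V) [DecidableRel G.Adj] (w : V → V → ℝ)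
    (x : V → ℝ) (y : V → V → ℝ)
    (hx : ∀ v, 0 ≤ x v) (hy : ∀ u v, 0 ≤ y u v)
    (hxy : ∀ u v, G.Adj u v → y u v ≤ x u ∧ y u v ≤ x v)
    (hsum : ∑ v : V, x v ≤ 1)
    (R : ℝ) (hR : R = (∑ u : V, ∑ v : V, if G.Adj u v then w u v * y u v else 0) / 2)
    (hRpos : 0 < R) :
    ∃ r : ℝ, 0 < r ∧ (Finset.univ.filter fun u => r ≤ x u).Nonempty ∧
      R * ((Finset.univ.filter fun u => r ≤ x u).card : ℝ) ≤
        (∑ u : V, ∑ v : V, if G.Adj u v ∧ r ≤ y u v then w u v else 0) / 2 := by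
  obtain ⟨u, v, huv, hyuv⟩ := exists_adj_pos_of_sum_pos G w hy (by linarith)
  obtain ⟨m, -, hm⟩ := univ.exists_max_image x ⟨u, mem_univ u⟩
  have hxM : ∀ u, x u ≤ x m := fun u => hm u (mem_univ u)
  have hyM : ∀ u v, G.Adj u v → y u v ≤ x m := fun u v huv => (hxy u v huv).1.trans (hxM u)
  have hM : 0 < x m := hyuv.trans_le (hyM u v huv)
  have hE := (integrableOn_superlevel_edgeWeight (M := x m) G w y).div_const 2
  have hV := (integrableOn_card_superlevel (M := x m) x).const_mul R
  obtain ⟨r, ⟨hr0, hrM⟩, hr⟩ := exists_nonneg_of_setIntegral_nonneg (by simp [hM])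
    measure_Ioc_lt_top.ne (hE.sub hV) (by
      rw [integral_sub' hE hV, integral_div, integral_const_mul,
        integral_superlevel_edgeWeight G w hy hyM, integral_card_superlevel hx hxM, ← hR]
      nlinarith)
  exact ⟨r, hr0, ⟨m, by simpa using hrM⟩, by simpa [sub_nonneg] using hr⟩

/-- for a feasible LP-DS solution with positive objective value `R`,
there is a threshold `r > 0` with `V(r) = {u : x_u ≥ r}` nonempty and
`Σ_{y_{uv} ≥ r} g(uv) ≥ R·|V(r)|`. -/
theorem lp_threshold_exists [Fintype V]
    (G : SimpleGraph V) [DecidableRel G.Adj] (w : V → V → ℝ)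
    (hwpos : ∀ u v, G.Adj u v → 0 < w u v) (hwsymm : ∀ u v, w u v = w v u)
    (x : V → ℝ) (y : V → V → ℝ)
    (hx : ∀ v, 0 ≤ x v) (hy : ∀ u v, 0 ≤ y u v) (hysym : ∀ u v, y u v = y v u)
    (hxy : ∀ u v, G.Adj u v → y u v ≤ x u ∧ y u v ≤ x v)
    (hsum : ∑ v : V, x v ≤ 1)
    (R : ℝ) (hR : R = (∑ u : V, ∑ v : V, if G.Adj u v then w u v * y u v else 0) / 2)
    (hRpos : 0 < R) :
    ∃ r : ℝ, 0 < r ∧ (Finset.univ.filter fun u => r ≤ x u).Nonempty ∧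
      R * ((Finset.univ.filter fun u => r ≤ x u).card : ℝ) ≤
        (∑ u : V, ∑ v : V, if G.Adj u v ∧ r ≤ y u v then w u v else 0) / 2 :=
  lp_threshold_exists_general G w x y hx hy hxy hsum R hR hRpos
end
end

section
/- Let π be a directed path from u to v such that every edge (a,b) on π satisfies g(a→b) > g'(a→b), where g and g' are two fractional orientations of the same weighted graph. Then g(a→b) > 0 for all edges of π (so π is a directed path in the orientation g), and g'(b→a) > 0 for all edges of π (so the reverse of π is a directed path in the orientation g'). Consequently, if both g and g' are locally fair, then g(u) ≤ g(v) and g'(v) ≤ g'(u). -/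
open Finset Real

noncomputable section

variable {V : Type*}

theorem List.IsChain.reflTransGen_of_head?_of_getLast? {α : Type*} {r : α → α → Prop}
    {l : List α} {a b : α} (hl : l.IsChain r) (ha : l.head? = some a) (hb : l.getLast? = some b) :
    Relation.ReflTransGen r a b := by
  cases l with
  | nil => simp at ha
  | cons x t =>
    obtain rfl : x = a := by simpa using ha
    exact List.relationReflTransGen_of_exists_isChain_cons t hl
      (by simpa [List.getLast?_eq_some_getLast] using hb)

section Orientation

variable [Fintype V] {G : SimpleGraph V} {w o o' : V → V → ℝ} {a b : V}

theorem IsOrientation.adj_of_pos (ho : IsOrientation G w o) (h : 0 < o a b) : G.Adj a b := by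
  by_contra hab
  exact h.ne' (ho.2.1 a b hab)

theorem IsOrientation.pos_of_lt (ho' : IsOrientation G w o') (h : o' a b < o a b) : 0 < o a b :=
  (ho'.1 a b).trans_lt h

/-- Both orientations split the same weight `w a b`, so losing weight on `a → b`
forces a gain on `b → a`. -/
theorem IsOrientation.pos_reverse_of_lt (ho : IsOrientation G w o) (ho' : IsOrientation G w o')
    (h : o' a b < o a b) : 0 < o' b a := by
  have hab : G.Adj a b := ho.adj_of_pos (ho'.pos_of_lt h)
  have hsplit := ho.2.2 a b hab
  have hsplit' := ho'.2.2 a b hab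
  linarith [ho.1 b a]

theorem LocallyFair.outdeg_le_of_reflTransGen (hfair : LocallyFair o)
    (h : Relation.ReflTransGen (fun a b => 0 < o a b) a b) : outdeg o a ≤ outdeg o b := by
  induction h with
  | refl => exact le_rfl
  | tail _ hstep ih => exact ih.trans (hfair _ _ hstep)

end Orientation

theorem symmetric_difference_path_general [Fintype V] (G : SimpleGraph V) (w : V → V → ℝ)
    (o o' : V → V → ℝ) (ho : IsOrientation G w o) (ho' : IsOrientation G w o')
    (u v : V) (l : List V)
    (hchain : l.Chain' fun a b => o' a b < o a b)
    (hhead : l.head? = some u) (hlast : l.getLast? = some v) :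
    (l.Chain' fun a b => 0 < o a b) ∧ (l.Chain' fun a b => 0 < o' b a) ∧
      (LocallyFair o → LocallyFair o' →
        outdeg o u ≤ outdeg o v ∧ outdeg o' v ≤ outdeg o' u) := by
  obtain ⟨hpos, hrev⟩ : (l.IsChain fun a b => 0 < o a b) ∧ l.IsChain fun a b => 0 < o' b a :=
    ⟨hchain.imp fun _ _ => ho'.pos_of_lt, hchain.imp fun _ _ => ho.pos_reverse_of_lt ho'⟩
  refine ⟨hpos, hrev, fun hfair hfair' => ⟨?_, ?_⟩⟩
  · exact hfair.outdeg_le_of_reflTransGen (hpos.reflTransGen_of_head?_of_getLast? hhead hlast)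
  · exact hfair'.outdeg_le_of_reflTransGen
      (Relation.reflTransGen_swap.mpr (hrev.reflTransGen_of_head?_of_getLast? hhead hlast))

/-- along a path on which `g(a→b) > g'(a→b)` for every edge, the path is
directed in `g`, its reverse is directed in `g'`, and if both orientations are locally
fair then `g(u) ≤ g(v)` and `g'(v) ≤ g'(u)`. -/
theorem symmetric_difference_path [Fintype V] (G : SimpleGraph V) (w : V → V → ℝ)
    (hwpos : ∀ u v, G.Adj u v → 0 < w u v) (hwsymm : ∀ u v, w u v = w v u)
    (o o' : V → V → ℝ) (ho : IsOrientation G w o) (ho' : IsOrientation G w o')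
    (u v : V) (l : List V)
    (hchain : l.Chain' fun a b => o' a b < o a b)
    (hhead : l.head? = some u) (hlast : l.getLast? = some v) :
    (l.Chain' fun a b => 0 < o a b) ∧ (l.Chain' fun a b => 0 < o' b a) ∧
      (LocallyFair o → LocallyFair o' →
        outdeg o u ≤ outdeg o v ∧ outdeg o' v ≤ outdeg o' u) :=
  symmetric_difference_path_general G w o o' ho ho' u v l hchain hhead hlast
end
end

section
/- Let G be a finite weighted graph with locally fair fractional orientation giving out-degrees g*(·), let g be an η-fair fractional orientation, and suppose some vertex u has g(u) > (1+ε)·g*(u) where η ≤ ε²/(128 log n) and 0 < ε ≤ 1. Partition V into G¹ = {v : g*(v) ≤ g*(u)} and G² = {v : g*(v) > g*(u)}. Then for any subset S ⊆ G¹: the total weight of edges inside S plus the total weight of edges from S to G² is at most Σ_{v∈S} g*(v). -/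
open Finset Real

noncomputable section

variable {V : Type*}

open Classical in
/-- with `G¹ = {v : g*(v) ≤ g*(u)}` and `G² = {v : g*(v) > g*(u)}`,
for any `S ⊆ G¹` the weight of edges inside `S` plus the weight of edges from `S`
to `G²` is at most `Σ_{v ∈ S} g*(v)`. -/
theorem weight_bound_on_low_part [Fintype V]
    (G : SimpleGraph V) [DecidableRel G.Adj] (w : V → V → ℝ)
    (hwpos : ∀ a b, G.Adj a b → 0 < w a b) (hwsymm : ∀ a b, w a b = w b a)
    (n : ℕ) (hn : Fintype.card V = n)
    (ostar : V → V → ℝ) (hostar : IsOrientation G w ostar) (hfair : LocallyFair ostar)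
    (ε η : ℝ) (hε : 0 < ε) (hε1 : ε ≤ 1) (hη : η ≤ ε ^ 2 / (128 * Real.log n))
    (o : V → V → ℝ) (ho : IsOrientation G w o) (hetafair : EtaFair η o)
    (u : V) (hu : (1 + ε) * outdeg ostar u < outdeg o u)
    (S : Finset V) (hS : ∀ v ∈ S, outdeg ostar v ≤ outdeg ostar u) :
    edgeWeight G w S +
        ∑ a ∈ S, ∑ b ∈ Finset.univ.filter (fun b => outdeg ostar u < outdeg ostar b),
          (if G.Adj a b then w a b else 0) ≤
      ∑ v ∈ S, outdeg ostar v := by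
  classical
  obtain ⟨hnn, hsupp, hsum⟩ := hostar
  set T := Finset.univ.filter (fun b => outdeg ostar u < outdeg ostar b) with hT
  have hdisj : Disjoint S T := by
    rw [Finset.disjoint_left]
    intro a haS haT
    simp only [hT, Finset.mem_filter] at haT
    exact absurd (hS a haS) (not_le.mpr haT.2)
  have key : (∑ a ∈ S, ∑ b ∈ S, ostar a b) + ∑ a ∈ S, ∑ b ∈ T, ostar a b ≤
      ∑ v ∈ S, outdeg ostar v := by
    rw [← Finset.sum_add_distrib]
    apply Finset.sum_le_sum
    intro a _
    rw [← Finset.sum_union hdisj]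
    exact Finset.sum_le_sum_of_subset_of_nonneg (Finset.subset_univ _)
      (fun i _ _ => hnn _ _)
  have h1 : ∑ a ∈ S, ∑ b ∈ S, ostar a b = edgeWeight G w S := by
    have h2 : (∑ a ∈ S, ∑ b ∈ S, ostar a b) * 2
        = ∑ a ∈ S, ∑ b ∈ S, (if G.Adj a b then w a b else 0) := by
      rw [mul_two]
      nth_rewrite 2 [Finset.sum_comm]
      rw [← Finset.sum_add_distrib]
      refine Finset.sum_congr rfl fun a _ => ?_
      rw [← Finset.sum_add_distrib]
      refine Finset.sum_congr rfl fun b _ => ?_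
      by_cases hab : G.Adj a b
      · simp [hab, hsum a b hab]
      · simp [hab, hsupp a b hab, hsupp b a (fun h => hab h.symm)]
    unfold edgeWeight
    linarith
  have h2 : ∀ a ∈ S, ∀ b ∈ T, ostar a b = (if G.Adj a b then w a b else 0) := by
    intro a ha b hb
    by_cases hab : G.Adj a b
    · simp only [hab, if_true]
      have hba : ostar b a = 0 := by
        by_contra h
        have hpos : 0 < ostar b a := lt_of_le_of_ne (hnn b a) (Ne.symm h)
        have := hfair b a hpos
        simp only [hT, Finset.mem_filter] at hb
        linarith [hS a ha, hb.2]
      have := hsum a b hab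
      linarith
    · simp [hab, hsupp a b hab]
  calc edgeWeight G w S + ∑ a ∈ S, ∑ b ∈ T, (if G.Adj a b then w a b else 0)
      = (∑ a ∈ S, ∑ b ∈ S, ostar a b) + ∑ a ∈ S, ∑ b ∈ T, ostar a b := by
        rw [h1]
        exact congrArg _ (Finset.sum_congr rfl fun a ha =>
          Finset.sum_congr rfl fun b hb => (h2 a ha b hb).symm)
    _ ≤ _ := key
end
end
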